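/- Suppose for some τ, L > 0 a random variable Z satisfies P(|Z| > (τ/L)·h₂⁻¹(L²t/2)) ≤ 2·e^{−t} for all t > 0. Then ‖Z‖_{Ψ₂(·;√3·L)} ≤ √3·τ. -/

import Mathlib

/-!
With `g = Ψ₂(|Z| / (√3 τ); √3 L)`, the event `g > s` is the event `h₂(L |Z| / τ) > L² t / 2` for
`t = 3 log (1 + s)`, so the tail hypothesis gives `P(g > s) ≤ 2 e^{-t} = 2 (1 + s)^{-3}`.
By the layer-cake formula `E g ≤ ∫₀^∞ 2 (1 + s)^{-3} ds = 1`, hence `√3 τ` belongs to the set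
whose infimum is the Orlicz norm.
-/

open MeasureTheory

noncomputable def h₂ (x : ℝ) : ℝ := (1 + x) * Real.log (1 + x) - x
noncomputable def Ψ₂ (x L : ℝ) : ℝ := Real.exp ((2 / L ^ 2) * h₂ (L * x)) - 1

open Set Real Filter

lemma hasDerivAt_h₂ {x : ℝ} (hx : 0 < 1 + x) : HasDerivAt h₂ (log (1 + x)) x := by
  have h₁ : HasDerivAt (fun y : ℝ => 1 + y) 1 x := (hasDerivAt_id' x).const_add 1
  refine ((h₁.mul (h₁.log hx.ne')).sub (hasDerivAt_id' x)).congr_deriv ?_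
  field_simp
  ring

lemma strictMonoOn_h₂ : StrictMonoOn h₂ (Ici 0) := by
  refine strictMonoOn_of_deriv_pos (convex_Ici 0)
    (fun x hx => (hasDerivAt_h₂ (by linarith [mem_Ici.1 hx])).continuousAt.continuousWithinAt)
    fun x hx => ?_
  rw [interior_Ici, mem_Ioi] at hx
  rw [(hasDerivAt_h₂ (by linarith)).deriv]
  exact log_pos (by linarith)

lemma h₂_nonneg {x : ℝ} (hx : 0 ≤ x) : 0 ≤ h₂ x := by
  simpa [h₂] using strictMonoOn_h₂.monotoneOn self_mem_Ici hx hx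

lemma measurable_Ψ₂ (L : ℝ) : Measurable fun x => Ψ₂ x L := by
  unfold Ψ₂ h₂
  fun_prop

lemma Ψ₂_nonneg {x L : ℝ} (hx : 0 ≤ x) (hL : 0 ≤ L) : 0 ≤ Ψ₂ x L := by
  have := h₂_nonneg (mul_nonneg hL hx)
  simp only [Ψ₂, sub_nonneg, one_le_exp_iff]
  positivity

lemma lt_Ψ₂_iff {x L s : ℝ} (hL : L ≠ 0) (hs : -1 < s) :
    s < Ψ₂ x L ↔ L ^ 2 / 2 * log (1 + s) < h₂ (L * x) := by
  rw [Ψ₂, lt_sub_iff_add_lt', ← log_lt_iff_lt_exp (by linarith), ← lt_div_iff₀' (by positivity)]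
  field_simp

lemma integral_Ioi_add_one_rpow {a : ℝ} (ha : a < -1) :
    ∫ s in Ioi (0 : ℝ), (s + 1) ^ a = -1 / (a + 1) := by
  have hd : ∀ x ∈ Ici (0 : ℝ),
      HasDerivAt (fun t => (t + 1) ^ (a + 1) / (a + 1)) ((x + 1) ^ a) x := by
    intro x hx
    refine ((((hasDerivAt_id' x).add_const 1).rpow_const (p := a + 1)
      (Or.inl (by linarith [mem_Ici.1 hx]))).div_const (a + 1)).congr_deriv ?_
    field_simp [show a + 1 ≠ 0 by linarith]
    simp
  have ht : Tendsto (fun t : ℝ => (t + 1) ^ (a + 1) / (a + 1)) atTop (nhds (0 / (a + 1))) := by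
    rw [← neg_neg (a + 1)]
    exact (tendsto_rpow_neg_atTop (by linarith)).comp
      (tendsto_atTop_add_const_right _ 1 tendsto_id) |>.div_const _
  rw [integral_Ioi_of_hasDerivAt_of_tendsto' hd
    (integrableOn_add_rpow_Ioi_of_lt ha (by norm_num)) ht]
  simp [neg_div]

lemma integral_le_of_meas_lt_le {α : Type*} [MeasurableSpace α] {μ : Measure α} {f : α → ℝ}
    (hf_nn : 0 ≤ᵐ[μ] f) (hf : AEMeasurable f μ) {g : ℝ → ℝ} (hg : IntegrableOn g (Ioi 0))
    (hg_nn : ∀ t > 0, 0 ≤ g t) (h : ∀ t > 0, μ {a | t < f a} ≤ ENNReal.ofReal (g t)) :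
    ∫ a, f a ∂μ ≤ ∫ t in Ioi 0, g t := by
  have hg_nn' : 0 ≤ᵐ[volume.restrict (Ioi 0)] g :=
    (ae_restrict_iff' measurableSet_Ioi).2 (ae_of_all _ hg_nn)
  rw [integral_eq_lintegral_of_nonneg_ae hf_nn hf.aestronglyMeasurable]
  refine ENNReal.toReal_le_of_le_ofReal (integral_nonneg_of_ae hg_nn') ?_
  rw [ofReal_integral_eq_lintegral_ofReal hg hg_nn', lintegral_eq_lintegral_meas_lt μ hf_nn hf]
  exact setLIntegral_mono' measurableSet_Ioi h

lemma lt_of_lt_Ψ₂_sqrt_three {τ L s x u : ℝ} (hτ : 0 < τ) (hL : 0 < L) (hs : 0 < s)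
    (hx : 0 ≤ x) (hu : 0 ≤ u) (hhu : h₂ u = L ^ 2 * (3 * log (1 + s)) / 2)
    (h : s < Ψ₂ (x / (√3 * τ)) (√3 * L)) : τ / L * u < x := by
  have harg : √3 * L * (x / (√3 * τ)) = L * x / τ := by field_simp
  have hlevel : (√3 * L) ^ 2 / 2 * log (1 + s) = L ^ 2 * (3 * log (1 + s)) / 2 := by
    rw [mul_pow, sq_sqrt zero_le_three]
    ring
  rw [lt_Ψ₂_iff (by positivity) (by linarith), harg, hlevel, ← hhu,
    strictMonoOn_h₂.lt_iff_lt hu (mem_Ici.2 (by positivity)), lt_div_iff₀ hτ] at h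
  rw [div_mul_eq_mul_div, div_lt_iff₀ hL]
  linarith

theorem bennett_orlicz_norm_from_tail_general {Ω : Type*} [MeasurableSpace Ω]
    (μ : Measure Ω) (Z : Ω → ℝ) (hZ : Measurable Z)
    (τ L : ℝ) (hτ : 0 < τ) (hL : 0 < L)
    (h₂inv : ℝ → ℝ) (hinv : ∀ y : ℝ, 0 ≤ y → 0 ≤ h₂inv y ∧ h₂ (h₂inv y) = y)
    (hyp : ∀ t : ℝ, 0 < t →
      μ {ω | |Z ω| > (τ / L) * h₂inv (L ^ 2 * t / 2)} ≤ ENNReal.ofReal (2 * Real.exp (-t))) :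
    sInf {c : ℝ | 0 < c ∧ ∫ ω, Ψ₂ (|Z ω| / c) (Real.sqrt 3 * L) ∂μ ≤ 1}
      ≤ Real.sqrt 3 * τ := by
  have tail : ∀ s > 0, μ {ω | s < Ψ₂ (|Z ω| / (√3 * τ)) (√3 * L)}
      ≤ ENNReal.ofReal (2 * (s + 1) ^ (-3 : ℝ)) := by
    intro s hs
    have ht : 0 < 3 * log (1 + s) := mul_pos three_pos (log_pos (by linarith))
    obtain ⟨hu, hhu⟩ := hinv (L ^ 2 * (3 * log (1 + s)) / 2) (by positivity)
    calc μ {ω | s < Ψ₂ (|Z ω| / (√3 * τ)) (√3 * L)}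
        ≤ μ {ω | |Z ω| > (τ / L) * h₂inv (L ^ 2 * (3 * log (1 + s)) / 2)} :=
          measure_mono fun ω => lt_of_lt_Ψ₂_sqrt_three hτ hL hs (abs_nonneg _) hu hhu
      _ ≤ ENNReal.ofReal (2 * exp (-(3 * log (1 + s)))) := hyp _ ht
      _ = ENNReal.ofReal (2 * (s + 1) ^ (-3 : ℝ)) := by
          rw [rpow_def_of_pos (by linarith), add_comm s, mul_comm _ (-3 : ℝ), neg_mul]
  refine csInf_le ⟨0, fun c hc => hc.1.le⟩ ⟨by positivity, ?_⟩
  calc ∫ ω, Ψ₂ (|Z ω| / (√3 * τ)) (√3 * L) ∂μ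
      ≤ ∫ s in Ioi 0, 2 * (s + 1) ^ (-3 : ℝ) :=
        integral_le_of_meas_lt_le
          (ae_of_all _ fun ω => Ψ₂_nonneg (by positivity) (by positivity))
          ((measurable_Ψ₂ _).comp (hZ.abs.div_const _)).aemeasurable
          ((integrableOn_add_rpow_Ioi_of_lt (by norm_num) (by norm_num)).const_mul 2)
          (fun s hs => mul_nonneg zero_le_two (rpow_nonneg (by linarith) _)) tail
    _ = 1 := by
        rw [integral_const_mul, integral_Ioi_add_one_rpow (by norm_num)]
        norm_num

theorem bennett_orlicz_norm_from_tail {Ω : Type*} [MeasurableSpace Ω]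
    (μ : Measure Ω) [IsProbabilityMeasure μ] (Z : Ω → ℝ) (hZ : Measurable Z)
    (τ L : ℝ) (hτ : 0 < τ) (hL : 0 < L)
    (h₂inv : ℝ → ℝ) (hinv : ∀ y : ℝ, 0 ≤ y → 0 ≤ h₂inv y ∧ h₂ (h₂inv y) = y)
    (hyp : ∀ t : ℝ, 0 < t →
      μ {ω | |Z ω| > (τ / L) * h₂inv (L ^ 2 * t / 2)} ≤ ENNReal.ofReal (2 * Real.exp (-t))) :
    sInf {c : ℝ | 0 < c ∧ ∫ ω, Ψ₂ (|Z ω| / c) (Real.sqrt 3 * L) ∂μ ≤ 1}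
      ≤ Real.sqrt 3 * τ :=
  bennett_orlicz_norm_from_tail_general μ Z hZ τ L hτ hL h₂inv hinv hyp
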